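/- For any graph G and any edge e of G, the game domination number satisfies |γ_g(G) − γ_g(G−e)| ≤ 2. -/

import Mathlib

open Classical

noncomputable section

namespace DomGame

variable {V : Type*} [Fintype V]

/-- Closed neighborhood of `v` as a `Finset`. -/
noncomputable def N (G : SimpleGraph V) (v : V) : Finset V :=
  Finset.univ.filter (fun u => G.Adj v u ∨ u = v)

/-- Legal moves given the set `S` of already dominated vertices. -/
noncomputable def moves (G : SimpleGraph V) (S : Finset V) : Finset V :=
  Finset.univ.filter (fun v => ¬ N G v ⊆ S)

lemma card_lt {G : SimpleGraph V} {S : Finset V} (v : V) (hv : v ∈ moves G S) :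
    (Finset.univ \ (S ∪ N G v)).card < (Finset.univ \ S).card := by
  simp only [moves, Finset.mem_filter] at hv
  obtain ⟨u, hu, hus⟩ := Finset.not_subset.mp hv.2
  apply Finset.card_lt_card
  refine ⟨Finset.sdiff_subset_sdiff (le_refl _) Finset.subset_union_left, ?_⟩
  intro hsub
  have := hsub (Finset.mem_sdiff.mpr ⟨Finset.mem_univ u, hus⟩)
  rw [Finset.mem_sdiff, Finset.mem_union] at this
  exact this.2 (Or.inr hu)

mutual
/-- Number of moves with optimal play when it is Dominator's turn and
`S` is the set of already dominated vertices. -/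
noncomputable def gameD (G : SimpleGraph V) (S : Finset V) : ℕ :=
  if h : (moves G S).Nonempty then
    1 + (moves G S).attach.inf' (by simpa using h)
      (fun v => gameS G (S ∪ N G v.1))
  else 0
termination_by (Finset.univ \ S).card
decreasing_by exact card_lt v.1 v.2

/-- Number of moves with optimal play when it is Staller's turn. -/
noncomputable def gameS (G : SimpleGraph V) (S : Finset V) : ℕ :=
  if h : (moves G S).Nonempty then
    1 + (moves G S).attach.sup' (by simpa using h)
      (fun v => gameD G (S ∪ N G v.1))
  else 0
termination_by (Finset.univ \ S).card
decreasing_by exact card_lt v.1 v.2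
end

/-- The (Dominator-start) game domination number. -/
noncomputable def gammaG (G : SimpleGraph V) : ℕ := gameD G ∅

/-- The Staller-start game domination number. -/
noncomputable def gammaG' (G : SimpleGraph V) : ℕ := gameS G ∅

end DomGame

/-!
Let `A` be the two ends of `e`. Predominating the at most two vertices of `A` shortens the game
by at most two moves: Dominator plays the real game while imagining the one with `A` already
dominated and copies his optimal imagined moves; a Staller move that is illegal in the imagined
game only dominates vertices of `A`, and one further real move then restores the imagined
position. Once `A` is dominated, `G` and `G - e` have the same closed neighbourhoods up to `A`,
hence the same game. With the continuation principle (dominating more never lengthens the game),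
both `γ_g(G)` and `γ_g(G - e)` lie between `γ_g(G | A)` and `γ_g(G | A) + 2`.
-/

namespace Finset

variable {α β : Type*}

theorem inf'_attach [SemilatticeInf α] (s : Finset β) (h : s.Nonempty) (f : β → α) :
    s.attach.inf' (attach_nonempty_iff.2 h) (fun x => f x) = s.inf' h f := by
  have := inf'_map (s := s.attach) (f := Function.Embedding.subtype _) f (by simpa using h)
  simp only [attach_map_val] at this
  exact this.symm

theorem sup'_attach [SemilatticeSup α] (s : Finset β) (h : s.Nonempty) (f : β → α) :
    s.attach.sup' (attach_nonempty_iff.2 h) (fun x => f x) = s.sup' h f :=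
  inf'_attach (α := αᵒᵈ) s h f

theorem card_union_sdiff_union_le [DecidableEq β] (s t u : Finset β) :
    #((s ∪ u) \ (t ∪ u)) ≤ #(s \ t) :=
  card_le_card fun x => by simp only [mem_sdiff, mem_union]; tauto

end Finset

namespace DomGame

open Finset

variable {V : Type*} [Fintype V] {G : SimpleGraph V} {R I S T : Finset V} {v : V}

lemma self_mem_N (G : SimpleGraph V) (v : V) : v ∈ N G v := by
  simp [N]

lemma mem_moves : v ∈ moves G S ↔ ¬ N G v ⊆ S := by
  simp [moves]

lemma mem_moves_of_notMem (hv : v ∉ S) : v ∈ moves G S :=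
  mem_moves.2 fun h => hv (h (self_mem_N G v))

lemma moves_nonempty (hS : S ≠ univ) : (moves G S).Nonempty := by
  obtain ⟨v, hv⟩ : ∃ v, v ∉ S := by simpa [eq_univ_iff_forall] using hS
  exact ⟨v, mem_moves_of_notMem hv⟩

lemma moves_univ : moves G univ = ∅ := by
  ext v
  simp [mem_moves]

theorem moves_induction (G : SimpleGraph V) {P : Finset V → Prop}
    (step : ∀ S, (∀ v ∈ moves G S, P (S ∪ N G v)) → P S) (S : Finset V) : P S :=
  step S fun v _ => moves_induction G step (S ∪ N G v)
termination_by #(univ \ S)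
decreasing_by exact card_lt v ‹_›

lemma gameD_univ : gameD G univ = 0 := by
  rw [gameD, dif_neg (by simp [moves_univ])]

lemma gameS_univ : gameS G univ = 0 := by
  rw [gameS, dif_neg (by simp [moves_univ])]

lemma gameD_of_ne_univ (hS : S ≠ univ) :
    gameD G S = 1 + (moves G S).inf' (moves_nonempty hS) fun v => gameS G (S ∪ N G v) := by
  rw [gameD, dif_pos (moves_nonempty hS)]
  exact congrArg (1 + ·) (inf'_attach _ _ fun v => gameS G (S ∪ N G v))

lemma gameS_of_ne_univ (hS : S ≠ univ) :
    gameS G S = 1 + (moves G S).sup' (moves_nonempty hS) fun v => gameD G (S ∪ N G v) := by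
  rw [gameS, dif_pos (moves_nonempty hS)]
  exact congrArg (1 + ·) (sup'_attach _ _ fun v => gameD G (S ∪ N G v))

lemma ne_univ_of_mem_moves (hv : v ∈ moves G S) : S ≠ univ := by
  rintro rfl
  simp [moves_univ] at hv

lemma gameD_le (hv : v ∈ moves G S) : gameD G S ≤ 1 + gameS G (S ∪ N G v) := by
  rw [gameD_of_ne_univ (ne_univ_of_mem_moves hv)]
  exact Nat.add_le_add_left (inf'_le _ hv) 1

lemma le_gameS (hv : v ∈ moves G S) : 1 + gameD G (S ∪ N G v) ≤ gameS G S := by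
  rw [gameS_of_ne_univ (ne_univ_of_mem_moves hv)]
  exact Nat.add_le_add_left (le_sup' (fun v => gameD G (S ∪ N G v)) hv) 1

lemma exists_gameD_eq (hS : S ≠ univ) :
    ∃ v ∈ moves G S, gameD G S = 1 + gameS G (S ∪ N G v) := by
  obtain ⟨v, hv, hmin⟩ := exists_mem_eq_inf' (moves_nonempty hS) fun v => gameS G (S ∪ N G v)
  exact ⟨v, hv, by rw [gameD_of_ne_univ hS, hmin]⟩

lemma exists_gameS_eq (hS : S ≠ univ) :
    ∃ v ∈ moves G S, gameS G S = 1 + gameD G (S ∪ N G v) := by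
  obtain ⟨v, hv, hmax⟩ := exists_mem_eq_sup' (moves_nonempty hS) fun v => gameD G (S ∪ N G v)
  exact ⟨v, hv, by rw [gameS_of_ne_univ hS, hmax]⟩

lemma game_le_card_univ_sdiff (G : SimpleGraph V) (S : Finset V) :
    gameD G S ≤ #(univ \ S) ∧ gameS G S ≤ #(univ \ S) := by
  induction S using moves_induction G with
  | step S ih =>
  rcases eq_or_ne S univ with rfl | hS
  · simp [gameD_univ, gameS_univ]
  constructor
  · obtain ⟨v, hv, hD⟩ := exists_gameD_eq (G := G) hS
    have := card_lt v hv
    have := (ih v hv).2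
    omega
  · obtain ⟨v, hv, hS⟩ := exists_gameS_eq (G := G) hS
    have := card_lt v hv
    have := (ih v hv).1
    omega

lemma game_le_of_subset (hTS : T ⊆ S) :
    gameD G S ≤ gameD G T ∧ gameS G S ≤ gameS G T := by
  induction T using moves_induction G generalizing S with
  | step T ih =>
  rcases eq_or_ne S univ with rfl | hS
  · simp [gameD_univ, gameS_univ]
  have hT : T ≠ univ := fun h => hS (univ_subset_iff.1 (h ▸ hTS))
  constructor
  · obtain ⟨v, hv, hDT⟩ := exists_gameD_eq (G := G) hT
    obtain ⟨w, hw, hvw⟩ : ∃ w ∈ moves G S, T ∪ N G v ⊆ S ∪ N G w := by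
      by_cases hvS : v ∈ moves G S
      · exact ⟨v, hvS, union_subset_union hTS le_rfl⟩
      · obtain ⟨w, hw⟩ := moves_nonempty (G := G) hS
        exact ⟨w, hw, (union_subset hTS (not_not.1 (mem_moves.not.1 hvS))).trans
          subset_union_left⟩
    have := gameD_le hw
    have := (ih v hv hvw).2
    omega
  · obtain ⟨w, hw, hSS⟩ := exists_gameS_eq (G := G) hS
    have hwT : w ∈ moves G T := mem_moves.2 fun h => mem_moves.1 hw (h.trans hTS)
    have := le_gameS hwT
    have := (ih w hwT (union_subset_union hTS le_rfl)).1
    omega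

theorem gameD_antitone (G : SimpleGraph V) : Antitone (gameD G) :=
  fun _ _ h => (game_le_of_subset h).1

theorem gameS_antitone (G : SimpleGraph V) : Antitone (gameS G) :=
  fun _ _ h => (game_le_of_subset h).2

lemma gameD_le_gameS_add_one_of_card_sdiff_le_one (h : #(I \ R) ≤ 1) :
    gameD G R ≤ gameS G I + 1 := by
  rcases eq_or_ne R univ with rfl | hR
  · simp [gameD_univ]
  obtain ⟨w, hw, hIw⟩ : ∃ w ∈ moves G R, I ⊆ R ∪ N G w := by
    rcases (I \ R).eq_empty_or_nonempty with hIR | ⟨u, hu⟩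
    · obtain ⟨w, hw⟩ := moves_nonempty (G := G) hR
      exact ⟨w, hw, (sdiff_eq_empty_iff_subset.1 hIR).trans subset_union_left⟩
    · refine ⟨u, mem_moves_of_notMem (mem_sdiff.1 hu).2, fun x hx => ?_⟩
      by_cases hxR : x ∈ R
      · exact mem_union_left _ hxR
      · rw [card_le_one.1 h x (mem_sdiff.2 ⟨hx, hxR⟩) u hu]
        exact mem_union_right _ (self_mem_N G u)
  have := gameD_le hw
  have := gameS_antitone G hIw
  omega

theorem game_le_add_two_of_card_sdiff_le_two (hRI : R ⊆ I) (h : #(I \ R) ≤ 2) :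
    gameD G R ≤ gameD G I + 2 ∧ gameS G R ≤ gameS G I + 2 := by
  induction R using moves_induction G generalizing I with
  | step R ih =>
  rcases eq_or_ne I univ with rfl | hI
  · have := game_le_card_univ_sdiff G R
    omega
  constructor
  · obtain ⟨x, hx, hDI⟩ := exists_gameD_eq (G := G) hI
    have hxR : x ∈ moves G R := mem_moves.2 fun h' => mem_moves.1 hx (h'.trans hRI)
    have := gameD_le hxR
    have := (ih x hxR (union_subset_union hRI le_rfl)
      ((card_union_sdiff_union_le _ _ _).trans h)).2
    omega
  rcases eq_or_ne R univ with rfl | hR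
  · simp [gameS_univ]
  obtain ⟨y, hy, hSR⟩ := exists_gameS_eq (G := G) hR
  by_cases hyI : y ∈ moves G I
  · have := le_gameS hyI
    have := (ih y hy (union_subset_union hRI le_rfl)
      ((card_union_sdiff_union_le _ _ _).trans h)).1
    omega
  -- Staller's move only dominates vertices of `I \ R`, so at most one of them is left over.
  have hNy : N G y ⊆ I := not_not.1 (mem_moves.not.1 hyI)
  obtain ⟨z, hzy, hzR⟩ := not_subset.1 (mem_moves.1 hy)
  have hlt : #(I \ (R ∪ N G y)) < #(I \ R) :=
    card_lt_card ((ssubset_iff_of_subset (sdiff_subset_sdiff le_rfl subset_union_left)).2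
      ⟨z, mem_sdiff.2 ⟨hNy hzy, hzR⟩, fun hz => (mem_sdiff.1 hz).2 (mem_union_right _ hzy)⟩)
  have := gameD_le_gameS_add_one_of_card_sdiff_le_one (G := G) (I := I) (R := R ∪ N G y)
    (by omega)
  omega

lemma moves_eq_of_union_N_eq {G G' : SimpleGraph V} (h : ∀ v, S ∪ N G v = S ∪ N G' v) :
    moves G S = moves G' S := by
  ext v
  rw [mem_moves, mem_moves, ← union_eq_left, h, union_eq_left]

theorem game_congr_of_union_N_eq {G G' : SimpleGraph V} (h : ∀ v, S ∪ N G v = S ∪ N G' v)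
    (hST : S ⊆ T) :
    gameD G T = gameD G' T ∧ gameS G T = gameS G' T := by
  induction T using moves_induction G with
  | step T ih =>
  rcases eq_or_ne T univ with rfl | hT
  · simp [gameD_univ, gameS_univ]
  have hTN : ∀ v, T ∪ N G v = T ∪ N G' v := fun v => by
    calc T ∪ N G v = T ∪ (S ∪ N G v) := by rw [← union_assoc, union_eq_left.2 hST]
      _ = T ∪ (S ∪ N G' v) := by rw [h]
      _ = T ∪ N G' v := by rw [← union_assoc, union_eq_left.2 hST]
  have hM := moves_eq_of_union_N_eq hTN
  have hchild : ∀ v ∈ moves G T, gameD G (T ∪ N G v) = gameD G' (T ∪ N G' v) ∧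
      gameS G (T ∪ N G v) = gameS G' (T ∪ N G' v) := fun v hv => by
    rw [← hTN v]
    exact ih v hv (hST.trans subset_union_left)
  rw [gameD_of_ne_univ hT, gameD_of_ne_univ hT, gameS_of_ne_univ hT, gameS_of_ne_univ hT]
  constructor <;> congr 1
  · exact inf'_congr _ hM fun v hv => (hchild v (hM ▸ hv)).2
  · exact sup'_congr _ hM fun v hv => (hchild v (hM ▸ hv)).1

lemma union_N_deleteEdges (G : SimpleGraph V) (a b v : V) :
    {a, b} ∪ N (G.deleteEdges {s(a, b)}) v = {a, b} ∪ N G v := by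
  ext u
  simp only [N, mem_union, mem_insert, mem_singleton, mem_filter, mem_univ, true_and,
    SimpleGraph.deleteEdges_adj, Set.mem_singleton_iff, Sym2.eq_iff]
  tauto

end DomGame

open DomGame in
/-- For any graph `G` and any edge `e` of `G`,
`|γ_g(G) − γ_g(G−e)| ≤ 2`. -/
theorem edge_removal_gameD {V : Type*} [Fintype V] (G : SimpleGraph V)
    (e : Sym2 V) (he : e ∈ G.edgeSet) :
    |(gammaG G : ℤ) - gammaG (G.deleteEdges {e})| ≤ 2 := by
  induction e using Sym2.ind with
  | _ a b =>
  have hab : (({a, b} : Finset V) \ ∅).card ≤ 2 := by simpa using Finset.card_le_two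
  have hG := (game_le_add_two_of_card_sdiff_le_two (G := G) (Finset.empty_subset _) hab).1
  have hG' := (game_le_add_two_of_card_sdiff_le_two (G := G.deleteEdges {s(a, b)})
    (Finset.empty_subset _) hab).1
  have hcongr := (game_congr_of_union_N_eq (union_N_deleteEdges G a b) (Finset.Subset.refl _)).1
  have := gameD_antitone G (Finset.empty_subset {a, b})
  have := gameD_antitone (G.deleteEdges {s(a, b)}) (Finset.empty_subset {a, b})
  rw [gammaG, gammaG, abs_le]
  omega
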